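/- Let f : ℕ → ℕ be strictly increasing with f(1) ≥ 1. If the set {f(k+1) − f(k) : k ≥ 1} of consecutive gaps is unbounded, then μ_f = Σ_{k≥1} 10^(−f(k)) is irrational. -/

import Mathlib

/-!
Multiplying `x = ∑ₖ b^(-e k)` by `b^(e n)` splits it into an integer and the tail
`∑_{k > n} b^(e n - e k)`, which is positive and at most `2 b^(-(e (n+1) - e n))`. Along long gaps
the tails get arbitrarily small, so some integer multiples of `x` come arbitrarily close to, but
never reach, an integer. For `x = a / q` this is impossible: `m x - p` lies in `(1/q) ℤ`.
-/

theorem irrational_of_forall_exists_int_mul_sub_mem_Ioo {x : ℝ}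
    (h : ∀ ε > 0, ∃ m p : ℤ, m * x - p ∈ Set.Ioo 0 ε) : Irrational x := by
  rintro ⟨r, rfl⟩
  obtain ⟨m, p, hpos, hlt⟩ := h (1 / r.den) (by simp [r.pos])
  have hden : (0 : ℝ) < r.den := by exact_mod_cast r.pos
  have hk : (r.den : ℝ) * (m * r - p) = ((m * r.num - r.den * p : ℤ) : ℝ) := by
    rw [Rat.cast_def]
    push_cast
    field_simp
  have hk_pos : 0 < m * r.num - r.den * p := by exact_mod_cast hk ▸ mul_pos hden hpos
  have hk_lt_one : m * r.num - r.den * p < 1 := by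
    have : (r.den : ℝ) * (m * r - p) < 1 :=
      calc (r.den : ℝ) * (m * r - p) < r.den * (1 / r.den) := by gcongr
        _ = 1 := by field_simp
    exact_mod_cast hk ▸ this
  omega

section PowComp

variable {r : ℝ} {e : ℕ → ℕ}

theorem summable_pow_comp_of_strictMono (hr0 : 0 ≤ r) (hr1 : r < 1) (he : StrictMono e) :
    Summable fun k ↦ r ^ e k :=
  (summable_geometric_of_lt_one hr0 hr1).comp_injective he.injective

theorem tsum_pow_comp_pos_of_strictMono (hr0 : 0 < r) (hr1 : r < 1) (he : StrictMono e) :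
    0 < ∑' k, r ^ e k :=
  (summable_pow_comp_of_strictMono hr0.le hr1 he).tsum_pos (fun _ ↦ by positivity) 0
    (by positivity)

theorem tsum_pow_comp_le_of_strictMono (hr0 : 0 ≤ r) (hr : r ≤ 1 / 2) (he : StrictMono e) :
    ∑' k, r ^ e k ≤ 2 * r ^ e 0 := by
  have hterm : ∀ k, r ^ e k ≤ r ^ e 0 * (1 / 2) ^ k := fun k ↦
    calc r ^ e k ≤ r ^ (k + e 0) := pow_le_pow_of_le_one hr0 (by linarith) (he.add_le_nat k 0)
      _ = r ^ e 0 * r ^ k := by rw [pow_add, mul_comm]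
      _ ≤ r ^ e 0 * (1 / 2) ^ k := by gcongr
  calc ∑' k, r ^ e k ≤ ∑' k, r ^ e 0 * (1 / 2 : ℝ) ^ k :=
        (summable_pow_comp_of_strictMono hr0 (by linarith) he).tsum_le_tsum hterm
          (summable_geometric_two.mul_left _)
    _ = 2 * r ^ e 0 := by rw [tsum_mul_left, tsum_geometric_two, mul_comm]

end PowComp

section InvPowSeries

variable {b : ℕ} {e : ℕ → ℕ}

theorem pow_mul_tsum_inv_pow_eq (hb : 1 < b) (he : StrictMono e) (n : ℕ) :
    (b : ℝ) ^ e n * ∑' k, (b : ℝ)⁻¹ ^ e k =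
      ((∑ k ∈ Finset.range (n + 1), b ^ (e n - e k) : ℕ) : ℝ) +
        ∑' j, (b : ℝ)⁻¹ ^ (e (j + (n + 1)) - e n) := by
  have hb0 : (b : ℝ) ≠ 0 := by positivity
  have hsum := summable_pow_comp_of_strictMono (inv_nonneg.mpr (Nat.cast_nonneg b))
    (inv_lt_one_of_one_lt₀ (by exact_mod_cast hb)) he
  rw [← hsum.sum_add_tsum_nat_add (n + 1), mul_add, Finset.mul_sum, ← tsum_mul_left]
  push_cast
  congr 1
  · refine Finset.sum_congr rfl fun k hk ↦ ?_
    rw [pow_sub₀ _ hb0 (he.monotone (Nat.lt_succ_iff.mp (Finset.mem_range.mp hk))), inv_pow]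
  · refine tsum_congr fun j ↦ ?_
    rw [pow_sub₀ _ (inv_ne_zero hb0) (he.monotone (by omega)), inv_pow, inv_pow, inv_inv,
      mul_comm]

theorem irrational_tsum_inv_pow_of_unbounded_gaps (hb : 2 ≤ b) (he : StrictMono e)
    (hgaps : ∀ B, ∃ n, B ≤ e (n + 1) - e n) : Irrational (∑' k, (b : ℝ)⁻¹ ^ e k) := by
  have hr0 : 0 < (b : ℝ)⁻¹ := by positivity
  have hr : (b : ℝ)⁻¹ ≤ 1 / 2 := by
    rw [one_div]
    exact inv_anti₀ two_pos (by exact_mod_cast hb)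
  refine irrational_of_forall_exists_int_mul_sub_mem_Ioo fun ε (hε : 0 < ε) ↦ ?_
  obtain ⟨B, hB⟩ := exists_pow_lt_of_lt_one (half_pos hε) (hr.trans_lt (by norm_num))
  obtain ⟨n, hn⟩ := hgaps B
  have htail : StrictMono fun j ↦ e (j + (n + 1)) - e n := fun i j hij ↦ by
    have := he (show i + (n + 1) < j + (n + 1) by omega)
    have := he.monotone (show n ≤ i + (n + 1) by omega)
    dsimp only
    omega
  refine ⟨(b : ℤ) ^ e n, ∑ k ∈ Finset.range (n + 1), b ^ (e n - e k), ?_⟩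
  push_cast
  rw [pow_mul_tsum_inv_pow_eq (by omega) he n]
  push_cast
  rw [add_sub_cancel_left]
  refine ⟨tsum_pow_comp_pos_of_strictMono hr0 (by linarith) htail, ?_⟩
  calc _ ≤ 2 * (b : ℝ)⁻¹ ^ (e (0 + (n + 1)) - e n) :=
        tsum_pow_comp_le_of_strictMono hr0.le hr htail
    _ ≤ 2 * (b : ℝ)⁻¹ ^ B := by
      gcongr 2 * ?_
      exact pow_le_pow_of_le_one hr0.le (by linarith) (by simpa using hn)
    _ < ε := by linarith

end InvPowSeries

theorem mu_f_irrational_of_unbounded_gaps_general (f : ℕ → ℕ)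
    (hmono : ∀ k : ℕ, 1 ≤ k → f k < f (k + 1))
    (hgaps : ∀ B : ℕ, ∃ k : ℕ, 1 ≤ k ∧ B ≤ f (k + 1) - f k) :
    Irrational (∑' k : ℕ, (10 : ℝ) ^ (-(f (k + 1) : ℤ))) := by
  have he : StrictMono fun k ↦ f (k + 1) :=
    strictMono_nat_of_lt_succ fun k ↦ hmono (k + 1) k.succ_pos
  have hgaps' : ∀ B, ∃ n, B ≤ f (n + 1 + 1) - f (n + 1) := fun B ↦ by
    obtain ⟨k, hk, hB⟩ := hgaps B
    obtain ⟨n, rfl⟩ := Nat.exists_eq_add_of_le' hk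
    exact ⟨n, hB⟩
  simpa only [zpow_neg, zpow_natCast, inv_pow, Nat.cast_ofNat] using
    irrational_tsum_inv_pow_of_unbounded_gaps (b := 10) (by norm_num) he hgaps'

theorem mu_f_irrational_of_unbounded_gaps (f : ℕ → ℕ)
    (hmono : ∀ k : ℕ, 1 ≤ k → f k < f (k + 1)) (hf1 : 1 ≤ f 1)
    (hgaps : ∀ B : ℕ, ∃ k : ℕ, 1 ≤ k ∧ B ≤ f (k + 1) - f k) :
    Irrational (∑' k : ℕ, (10 : ℝ) ^ (-(f (k + 1) : ℤ))) :=
  mu_f_irrational_of_unbounded_gaps_general f hmono hgaps
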